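/- arXiv:0809.2623 — 5 statements merged into one kernel-verified Lean document; each statement's English description precedes it below -/
import Mathlib

section
/- For positive integers m, n with m + n ≥ 3, the radio number of the complete bipartite graph K_{m,n} equals m + n + 1, i.e., rn(K_{m,n}) = m + n + 1. -/
/-!
In a graph of diameter `2` a radio labeling is just an injective positive labeling in which
adjacent vertices get labels at least `2` apart. For `K_{m,n}`, labeling one side `1, …, m` and
the other `m + 2, …, m + n + 1` therefore gives span `m + n + 1`. A labeling of span `m + n` would
use every label in `1, …, m + n`, and vertices with consecutive labels would be non-adjacent,
i.e. on the same side; following the labels from `1` upwards puts every vertex on one side.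
-/

def IsRadioLabeling {V : Type*} [Fintype V] (G : SimpleGraph V) (c : V → ℕ) : Prop :=
  Function.Injective c ∧ (∀ v, 1 ≤ c v) ∧
    ∀ u v : V, u ≠ v →
      (G.diam : ℤ) + 1 ≤ (G.dist u v : ℤ) + |(c u : ℤ) - (c v : ℤ)|

noncomputable def radioNumber {V : Type*} [Fintype V] (G : SimpleGraph V) : ℕ :=
  sInf {s : ℕ | ∃ c : V → ℕ, IsRadioLabeling G c ∧ s = Finset.univ.sup c}

open SimpleGraph Finset

section RadioLabeling

variable {V : Type*} [Fintype V] {G : SimpleGraph V} {c : V → ℕ}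

theorem IsRadioLabeling.diam_le_abs_sub_of_adj (hc : IsRadioLabeling G c) {u v : V}
    (huv : G.Adj u v) : (G.diam : ℤ) ≤ |(c u : ℤ) - c v| := by
  have := hc.2.2 u v huv.ne
  rw [dist_eq_one_iff_adj.mpr huv] at this
  push_cast at this
  linarith

theorem isRadioLabeling_of_diam_eq_two (hG : G.diam = 2) (hinj : Function.Injective c)
    (hpos : ∀ v, 1 ≤ c v) (hadj : ∀ u v, G.Adj u v → 2 ≤ |(c u : ℤ) - c v|) :
    IsRadioLabeling G c := by
  refine ⟨hinj, hpos, fun u v huv => ?_⟩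
  rw [hG]
  by_cases h : G.Adj u v
  · rw [dist_eq_one_iff_adj.mpr h]
    have := hadj u v h
    push_cast
    linarith
  · have hreach : G.Reachable u v :=
      (preconnected_of_ediam_ne_top (ediam_ne_top_of_diam_ne_zero (by omega))) u v
    have hdist : 2 ≤ G.dist u v := by
      have := hreach.pos_dist_of_ne huv
      have : G.dist u v ≠ 1 := fun h1 => h (dist_eq_one_iff_adj.mp h1)
      omega
    have hlabel : 1 ≤ |(c u : ℤ) - c v| :=
      Int.one_le_abs (sub_ne_zero.mpr (by exact_mod_cast hinj.ne huv))
    push_cast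
    omega

theorem IsRadioLabeling.exists_eq_of_sup_le_card (hc : IsRadioLabeling G c)
    (hspan : univ.sup c ≤ Fintype.card V) {k : ℕ} (hk : k ∈ Icc 1 (Fintype.card V)) :
    ∃ v, c v = k := by
  have himage : univ.image c = Icc 1 (Fintype.card V) := by
    refine eq_of_subset_of_card_le (fun l hl => ?_) ?_
    · obtain ⟨v, -, rfl⟩ := mem_image.mp hl
      exact mem_Icc.mpr ⟨hc.2.1 v, (le_sup (mem_univ v)).trans hspan⟩
    · simp [card_image_of_injective _ hc.1]
  obtain ⟨v, -, hv⟩ := mem_image.mp (himage ▸ hk)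
  exact ⟨v, hv⟩

/-- A labeling of span `|V|` lists the vertices along a Hamiltonian path of the complement. -/
theorem IsRadioLabeling.preconnected_compl (hc : IsRadioLabeling G c) (hdiam : 2 ≤ G.diam)
    (hspan : univ.sup c ≤ Fintype.card V) : Gᶜ.Preconnected := by
  have hstep : ∀ u v, c v = c u + 1 → Gᶜ.Adj u v := fun u v huv => by
    refine ⟨fun h => by simp [h] at huv, fun hadj => ?_⟩
    have := hc.diam_le_abs_sub_of_adj hadj
    rw [huv] at this
    simp at this
    omega
  intro u v
  obtain ⟨w, hw⟩ := hc.exists_eq_of_sup_le_card hspan (k := 1)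
    (mem_Icc.mpr ⟨le_rfl, Fintype.card_pos_iff.mpr ⟨u⟩⟩)
  have hreach : ∀ k x, c x = k + 1 → Gᶜ.Reachable w x := by
    intro k
    induction k with
    | zero => exact fun x hx => hc.1 (hw.trans hx.symm) ▸ .rfl
    | succ k ih =>
      intro x hx
      obtain ⟨y, hy⟩ := hc.exists_eq_of_sup_le_card hspan (k := k + 1)
        (mem_Icc.mpr ⟨by omega, by have := (le_sup (mem_univ x)).trans hspan; omega⟩)
      exact (ih y hy).trans (hstep y x (by omega)).reachable
  have hlabel : ∀ x, c x = c x - 1 + 1 := fun x => by have := hc.2.1 x; omega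
  exact (hreach _ u (hlabel u)).symm.trans (hreach _ v (hlabel v))

end RadioLabeling

section CompleteBipartite

variable {α β : Type*}

theorem completeBipartiteGraph_edist_le_two [Nonempty α] [Nonempty β] (u v : α ⊕ β) :
    (completeBipartiteGraph α β).edist u v ≤ 2 := by
  have hadj : ∀ a b, (completeBipartiteGraph α β).edist (.inl a) (.inr b) = 1 := fun a b =>
    edist_eq_one_iff_adj.mpr (by simp)
  obtain ⟨a⟩ := ‹Nonempty α›
  obtain ⟨b⟩ := ‹Nonempty β›
  rcases u with u | u <;> rcases v with v | v
  · calc _ ≤ _ := (completeBipartiteGraph α β).edist_triangle (v := .inr b)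
      _ = 2 := by rw [hadj, edist_comm, hadj]; rfl
  · simp [hadj]
  · simp [edist_comm, hadj]
  · calc _ ≤ _ := (completeBipartiteGraph α β).edist_triangle (v := .inl a)
      _ = 2 := by rw [edist_comm, hadj, hadj]; rfl

theorem completeBipartiteGraph_diam [Nonempty α] [Nonempty β]
    (h : Nontrivial α ∨ Nontrivial β) : (completeBipartiteGraph α β).diam = 2 := by
  have hediam : (completeBipartiteGraph α β).ediam ≤ 2 :=
    ediam_le_of_edist_le completeBipartiteGraph_edist_le_two
  have hne_top : (completeBipartiteGraph α β).ediam ≠ ⊤ :=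
    ne_top_of_le_ne_top (by decide) hediam
  have : Nontrivial (α ⊕ β) :=
    ⟨.inl (Classical.arbitrary α), .inr (Classical.arbitrary β), Sum.inl_ne_inr⟩
  have hne_zero := diam_ne_zero_of_ediam_ne_top hne_top
  have hne_one : (completeBipartiteGraph α β).diam ≠ 1 := by
    rw [Ne, diam_eq_one]
    rcases h with ⟨a, a', ha⟩ | ⟨b, b', hb⟩
    · exact ne_of_apply_ne (·.Adj (.inl a) (.inl a')) (by simpa using ha)
    · exact ne_of_apply_ne (·.Adj (.inr b) (.inr b')) (by simpa using hb)
  have hle : (completeBipartiteGraph α β).diam ≤ 2 := by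
    have := ENat.toNat_le_toNat hediam (by decide)
    simpa [diam] using this
  omega

theorem not_preconnected_compl_completeBipartiteGraph [Nonempty α] [Nonempty β] :
    ¬ (completeBipartiteGraph α β)ᶜ.Preconnected := by
  intro h
  have hside : ∀ u v : α ⊕ β, (completeBipartiteGraph α β)ᶜ.Adj u v →
      u.isLeft = v.isLeft := by
    rintro (u | u) (v | v) ⟨-, huv⟩ <;> simp_all
  have := ((reachable_iff_reflTransGen _ _).mp (h (.inl (Classical.arbitrary α))
    (.inr (Classical.arbitrary β)))).lift Sum.isLeft hside
  simp [Function.onFun, Relation.reflTransGen_eq_self] at this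

end CompleteBipartite

/-- The gap at label `m + 1` keeps the labels of adjacent vertices at least `2` apart. -/
def completeBipartiteRadioLabeling (m n : ℕ) : Fin m ⊕ Fin n → ℕ :=
  Sum.elim (fun i => i + 1) (fun j => m + 2 + j)

theorem isRadioLabeling_completeBipartiteRadioLabeling {m n : ℕ}
    (hdiam : (completeBipartiteGraph (Fin m) (Fin n)).diam = 2) :
    IsRadioLabeling (completeBipartiteGraph (Fin m) (Fin n))
      (completeBipartiteRadioLabeling m n) := by
  refine isRadioLabeling_of_diam_eq_two hdiam ?_ ?_ ?_
  · rintro (i | j) (i' | j') h <;>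
      simp [completeBipartiteRadioLabeling, Fin.val_inj] at h ⊢ <;> omega
  · rintro (i | j) <;>
      simp only [completeBipartiteRadioLabeling, Sum.elim_inl, Sum.elim_inr] <;> omega
  · rintro (i | j) (i' | j') h <;> simp [completeBipartiteRadioLabeling] at h ⊢
    · rw [abs_sub_comm, abs_of_nonneg (by omega)]; omega
    · rw [abs_of_nonneg (by omega)]; omega

theorem sup_completeBipartiteRadioLabeling {m n : ℕ} (hn : 1 ≤ n) :
    univ.sup (completeBipartiteRadioLabeling m n) = m + n + 1 := by
  refine le_antisymm (Finset.sup_le fun v _ => ?_) ?_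
  · rcases v with i | j <;> simp [completeBipartiteRadioLabeling] <;> omega
  · exact le_of_eq_of_le (by simp [completeBipartiteRadioLabeling]; omega)
      (le_sup (mem_univ (.inr ⟨n - 1, by omega⟩)))

/-- The radio number of the complete bipartite graph `K_{m,n}` is `m + n + 1`,
for positive `m`, `n` with `m + n ≥ 3`. -/
theorem radioNumber_completeBipartite (m n : ℕ) (hm : 1 ≤ m) (hn : 1 ≤ n)
    (hmn : 3 ≤ m + n) :
    radioNumber (completeBipartiteGraph (Fin m) (Fin n)) = m + n + 1 := by
  have : Nonempty (Fin m) := ⟨⟨0, hm⟩⟩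
  have : Nonempty (Fin n) := ⟨⟨0, hn⟩⟩
  have hdiam : (completeBipartiteGraph (Fin m) (Fin n)).diam = 2 := by
    refine completeBipartiteGraph_diam ?_
    simp only [Fin.nontrivial_iff_two_le]
    omega
  have hlabel := isRadioLabeling_completeBipartiteRadioLabeling hdiam
  refine le_antisymm (Nat.sInf_le ⟨_, hlabel, (sup_completeBipartiteRadioLabeling hn).symm⟩)
    (le_csInf ⟨_, _, hlabel, rfl⟩ ?_)
  rintro s ⟨c, hc, rfl⟩
  by_contra! hspan
  refine not_preconnected_compl_completeBipartiteGraph (hc.preconnected_compl hdiam.ge ?_)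
  simpa using Nat.le_of_lt_succ hspan
end

section
/- For every n ≥ 4, the radio number of the gear graph G_n is at least 4n + 2, i.e., rn(G_n) ≥ 4n + 2. -/
/-- The gear graph `G_n`: the center `none` is adjacent to each `v i = some (Sum.inl i)`,
and each `w i = some (Sum.inr i)` is adjacent to `v i` and `v (i+1)` (indices mod `n`);
thus the `v`'s and `w`'s alternate around a cycle of length `2n`. -/
def gearGraph (n : ℕ) : SimpleGraph (Option (Fin n ⊕ Fin n)) :=
  SimpleGraph.fromRel (fun u v =>
    (∃ i : Fin n, u = none ∧ v = some (Sum.inl i)) ∨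
    (∃ i j : Fin n, u = some (Sum.inr i) ∧ v = some (Sum.inl j) ∧
      (j = i ∨ (i.val + 1) % n = j.val)))

theorem Nat.add_one_mod_eq_ite {i n : ℕ} (hi : i < n) :
    (i + 1) % n = if i + 1 = n then 0 else i + 1 := by
  split_ifs with h
  · rw [h, Nat.mod_self]
  · exact Nat.mod_eq_of_lt (by omega)

section RadioLabeling

variable {V : Type*} [Fintype V] {G : SimpleGraph V} {c : V → ℕ}

theorem exists_isRadioLabeling (G : SimpleGraph V) : ∃ c, IsRadioLabeling G c := by
  set e := Fintype.equivFin V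
  have he : ∀ u v, u ≠ v → (1 : ℤ) ≤ |((e u : ℕ) : ℤ) - (e v : ℕ)| := fun u v huv =>
    Int.one_le_abs <| sub_ne_zero.mpr <| by exact_mod_cast fun h => huv (e.injective (Fin.ext h))
  refine ⟨fun v => (G.diam + 1) * e v + 1, fun u v h => e.injective (Fin.ext ?_),
    fun v => Nat.le_add_left 1 _, fun u v huv => ?_⟩
  · simpa using h
  · have hsplit : (((G.diam + 1) * e u + 1 : ℕ) : ℤ) - ((G.diam + 1) * e v + 1 : ℕ) =
        ((G.diam : ℤ) + 1) * (((e u : ℕ) : ℤ) - (e v : ℕ)) := by push_cast; ring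
    rw [hsplit, abs_mul, abs_of_nonneg (by positivity)]
    nlinarith [he u v huv, (G.dist u v).cast_nonneg (α := ℤ)]

theorem le_radioNumber {m : ℕ} (h : ∀ c, IsRadioLabeling G c → m ≤ Finset.univ.sup c) :
    m ≤ radioNumber G := by
  obtain ⟨c, hc⟩ := exists_isRadioLabeling G
  exact le_csInf ⟨_, c, hc, rfl⟩ fun s ⟨c, hc, hs⟩ => hs ▸ h c hc

theorem IsRadioLabeling.pairwiseDisjoint_Icc (hc : IsRadioLabeling G c) {r : V → ℕ}
    (hr : ∀ x y, x ≠ y → r x + r y + G.dist x y ≤ G.diam) :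
    (Set.univ : Set V).PairwiseDisjoint fun x => Finset.Icc ((c x : ℤ) - r x) (c x + r x) := by
  intro x _ y _ hxy
  have hgap := hc.2.2 x y hxy
  have hxy' : (r x + r y + G.dist x y : ℤ) ≤ G.diam := by exact_mod_cast hr x y hxy
  rw [Function.onFun, Finset.disjoint_left]
  intro z hzx hzy
  rw [Finset.mem_Icc] at hzx hzy
  have : |(c x : ℤ) - c y| ≤ r x + r y := abs_le.mpr ⟨by linarith, by linarith⟩
  linarith

theorem IsRadioLabeling.sum_le_card (hc : IsRadioLabeling G c) {r : V → ℕ}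
    (hr : ∀ x y, x ≠ y → r x + r y + G.dist x y ≤ G.diam) {T : Finset ℤ}
    (hT : ∀ x, Finset.Icc ((c x : ℤ) - r x) (c x + r x) ⊆ T) :
    ∑ x, (2 * r x + 1) ≤ T.card := by
  have hdisj := hc.pairwiseDisjoint_Icc hr
  rw [← Finset.coe_univ] at hdisj
  calc ∑ x, (2 * r x + 1)
      = (Finset.univ.biUnion fun x => Finset.Icc ((c x : ℤ) - r x) (c x + r x)).card := by
        rw [Finset.card_biUnion hdisj]
        refine Finset.sum_congr rfl fun x _ => ?_
        rw [Int.card_Icc]; omega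
    _ ≤ T.card := Finset.card_le_card (Finset.biUnion_subset.mpr fun x _ => hT x)

end RadioLabeling

namespace SimpleGraph

theorem Connected.abs_sub_le_dist {V : Type*} {G : SimpleGraph V} (hG : G.Connected) {f : V → ℤ}
    (hf : ∀ u v, G.Adj u v → |f u - f v| ≤ 1) (u v : V) : |f u - f v| ≤ G.dist u v := by
  obtain ⟨p, hp⟩ := (hG u v).exists_walk_length_eq_dist
  rw [← hp]
  clear hp
  induction p with
  | nil => simp
  | @cons u v w h _ ih =>
    rw [Walk.length_cons]
    push_cast
    linarith [abs_sub_le (f u) (f v) (f w), hf u v h]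

end SimpleGraph

section GearGraph

variable {n : ℕ}

theorem gearGraph_adj_none_inl (i : Fin n) : (gearGraph n).Adj none (some (.inl i)) := by
  rw [gearGraph, SimpleGraph.fromRel_adj]
  exact ⟨by simp, .inl (.inl ⟨i, rfl, rfl⟩)⟩

theorem gearGraph_adj_inr_inl (i : Fin n) : (gearGraph n).Adj (some (.inr i)) (some (.inl i)) := by
  rw [gearGraph, SimpleGraph.fromRel_adj]
  exact ⟨by simp, .inl (.inr ⟨i, i, rfl, rfl, .inl rfl⟩)⟩

theorem gearGraph_dist_none_inl_le (i : Fin n) : (gearGraph n).dist none (some (.inl i)) ≤ 1 :=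
  SimpleGraph.dist_le (gearGraph_adj_none_inl i).toWalk

theorem gearGraph_dist_none_inr_le (i : Fin n) : (gearGraph n).dist none (some (.inr i)) ≤ 2 :=
  SimpleGraph.dist_le <| .cons (gearGraph_adj_none_inl i) <| (gearGraph_adj_inr_inl i).symm.toWalk

theorem gearGraph_dist_inl_inl_le (i j : Fin n) :
    (gearGraph n).dist (some (.inl i)) (some (.inl j)) ≤ 2 :=
  SimpleGraph.dist_le <| .cons (gearGraph_adj_none_inl i).symm <| (gearGraph_adj_none_inl j).toWalk

theorem gearGraph_dist_inl_inr_le (i j : Fin n) :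
    (gearGraph n).dist (some (.inl i)) (some (.inr j)) ≤ 3 :=
  SimpleGraph.dist_le <| .cons (gearGraph_adj_none_inl i).symm <|
    .cons (gearGraph_adj_none_inl j) <| (gearGraph_adj_inr_inl j).symm.toWalk

theorem gearGraph_connected : (gearGraph n).Connected := by
  refine ((gearGraph n).connected_iff_exists_forall_reachable).mpr ⟨none, ?_⟩
  rintro (_ | i | i)
  · rfl
  · exact (gearGraph_adj_none_inl i).reachable
  · exact (gearGraph_adj_none_inl i).reachable.trans (gearGraph_adj_inr_inl i).symm.reachable

def gearPotential (n : ℕ) : Option (Fin n ⊕ Fin n) → ℤ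
  | none => 2
  | some (.inl i) => if i.val ≤ 1 then 1 else if i.val ≤ 3 then 3 else 2
  | some (.inr i) => if i.val = 0 then 0 else if i.val = 2 then 4 else 2

theorem abs_gearPotential_sub_le_one (hn : 4 ≤ n) (u v : Option (Fin n ⊕ Fin n))
    (h : (gearGraph n).Adj u v) :
    |gearPotential n u - gearPotential n v| ≤ 1 := by
  wlog huv : (∃ i, u = none ∧ v = some (.inl i)) ∨ ∃ i j : Fin n,
      u = some (.inr i) ∧ v = some (.inl j) ∧ (j = i ∨ (i.val + 1) % n = j.val) generalizing u v
  · have hvu := h.symm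
    rw [gearGraph, SimpleGraph.fromRel_adj] at h
    rw [abs_sub_comm]
    exact this v u hvu (h.2.resolve_left huv)
  rcases huv with ⟨i, rfl, rfl⟩ | ⟨i, j, rfl, rfl, hij⟩
  · simp only [gearPotential, abs_le]
    split_ifs <;> omega
  · rw [Nat.add_one_mod_eq_ite i.isLt] at hij
    have := j.isLt
    simp only [gearPotential, abs_le, Fin.ext_iff] at hij ⊢
    split_ifs at hij ⊢ <;> omega

theorem four_le_diam_gearGraph (hn : 4 ≤ n) : 4 ≤ (gearGraph n).diam := by
  have h := gearGraph_connected.abs_sub_le_dist (abs_gearPotential_sub_le_one hn)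
    (some (.inr ⟨0, by omega⟩)) (some (.inr ⟨2, by omega⟩))
  norm_num [gearPotential] at h
  exact (Nat.cast_le.mp h).trans <| SimpleGraph.dist_le_diam <|
    SimpleGraph.connected_iff_ediam_ne_top.mp gearGraph_connected

def gearRadius (n : ℕ) : Option (Fin n ⊕ Fin n) → ℕ
  | none => 2
  | some (.inl _) => 1
  | some (.inr _) => 0

theorem gearRadius_add_add_dist_le_diam (hn : 4 ≤ n) (x y : Option (Fin n ⊕ Fin n))
    (hxy : x ≠ y) :
    gearRadius n x + gearRadius n y + (gearGraph n).dist x y ≤ (gearGraph n).diam := by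
  have hdiam := four_le_diam_gearGraph hn
  have hdist := (gearGraph n).dist_comm (u := x) (v := y)
  rcases x with _ | i | i <;> rcases y with _ | j | j <;> simp only [gearRadius]
  · exact (hxy rfl).elim
  · linarith [gearGraph_dist_none_inl_le j]
  · linarith [gearGraph_dist_none_inr_le j]
  · linarith [gearGraph_dist_none_inl_le i]
  · linarith [gearGraph_dist_inl_inl_le i j]
  · linarith [gearGraph_dist_inl_inr_le i j]
  · linarith [gearGraph_dist_none_inr_le i]
  · linarith [gearGraph_dist_inl_inr_le j i]
  · simpa using SimpleGraph.dist_le_diam <| SimpleGraph.ediam_ne_top_of_diam_ne_zero (by omega)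

theorem sum_two_mul_gearRadius_add_one : ∑ x, (2 * gearRadius n x + 1) = 4 * n + 5 := by
  simp [Fintype.sum_option, Fintype.sum_sum_type, gearRadius]
  ring

/-- Only the hub's interval can stick out of `[0, span + 1]`, and then on one side only. -/
theorem IsRadioLabeling.exists_Icc_superset_gearRadius {c : Option (Fin n ⊕ Fin n) → ℕ}
    (hn : 1 ≤ n) (hc : IsRadioLabeling (gearGraph n) c) :
    ∃ a : ℤ, ∀ x, Finset.Icc ((c x : ℤ) - gearRadius n x) (c x + gearRadius n x) ⊆
      Finset.Icc a (a + Finset.univ.sup c + 2) := by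
  have hle x : c x ≤ Finset.univ.sup c := Finset.le_sup (Finset.mem_univ x)
  have hpos := hc.2.1
  have hhub : 2 ≤ c none ∨ c none < Finset.univ.sup c := by
    have hne : c (some (.inl ⟨0, hn⟩)) ≠ c none := hc.1.ne (by simp)
    have := hle (some (.inl ⟨0, hn⟩))
    have := hpos (some (.inl ⟨0, hn⟩))
    omega
  have := hle none
  refine ⟨if 2 ≤ c none then 0 else -1, fun x => Finset.Icc_subset_Icc ?_ ?_⟩ <;>
    have := hle x <;> have := hpos x <;> rcases x with _ | i | i <;> simp only [gearRadius] <;>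
    split_ifs <;> omega

end GearGraph

/-- For `n ≥ 4`, the radio number of the gear graph `G_n` is at least `4n + 2`. -/
theorem radioNumber_gear_lower (n : ℕ) (hn : 4 ≤ n) :
    4 * n + 2 ≤ radioNumber (gearGraph n) := by
  refine le_radioNumber fun c hc => ?_
  obtain ⟨a, hballs⟩ := hc.exists_Icc_superset_gearRadius (by omega)
  have hcount := hc.sum_le_card (gearRadius_add_add_dist_le_diam hn) hballs
  rw [sum_two_mul_gearRadius_add_one, Int.card_Icc] at hcount
  omega
end

section
/- For every n ≥ 7, the radio number of the gear graph G_n is at most 4n + 2, i.e., rn(G_n) ≤ 4n + 2. -/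
/-!
Label the centre `1`, the `w j` with `4, …, n + 3` and the spokes `v i` with
`n + 5, n + 8, …, 4n + 2`. Every vertex is within distance 2 of the centre, so the diameter
is at most 4 and it suffices that `d(u,v) + |c u - c v| ≥ 5`. The `w`'s are ranked even
indices first, then odd ones, so that for `n ≥ 7` two `w`'s next to a common spoke get
labels at least 3 apart, while any other two `w`'s are at distance 4. The spokes are ranked
starting from `v 1`, whose neighbours `w 0`, `w 1` avoid the two largest `w`-labels; since
the graph is bipartite, every other `w` is at odd distance, hence at least 3, from `v 1`.
-/

open SimpleGraph

section RadioLabeling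

variable {V : Type*} [Fintype V] {G : SimpleGraph V}

theorem radioNumber_le_of_isRadioLabeling {c : V → ℕ} (hc : IsRadioLabeling G c) :
    radioNumber G ≤ Finset.univ.sup c :=
  Nat.sInf_le ⟨c, hc, rfl⟩

/-- Injectivity is automatic: equal labels would force `d(u,v) > diam G`. -/
theorem isRadioLabeling_of_ediam_le {d : ℕ} (hd : G.ediam ≤ d) {c : V → ℕ}
    (hpos : ∀ v, 1 ≤ c v)
    (h : ∀ u v, u ≠ v → (d : ℤ) + 1 ≤ G.dist u v + |(c u : ℤ) - c v|) :
    IsRadioLabeling G c := by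
  have hfin : G.ediam ≠ ⊤ := ne_top_of_le_ne_top (by simp) hd
  have hdiam : G.diam ≤ d := ENat.toNat_le_of_le_natCast hd
  have hdist : ∀ u v, G.dist u v ≤ d := fun u v => (dist_le_diam hfin).trans hdiam
  refine ⟨fun u v huv => ?_, hpos, fun u v huv => ?_⟩
  · by_contra hne
    have hsep := h u v hne
    rw [huv, sub_self, abs_zero] at hsep
    have := hdist u v
    omega
  · have := h u v huv
    omega

end RadioLabeling

namespace SimpleGraph

variable {V : Type*} {G : SimpleGraph V} {u v : V}

theorem Reachable.two_lt_dist_of_ne_of_not_adj (h : G.Reachable u v) (hne : u ≠ v)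
    (hnadj : ¬G.Adj u v) (hcommon : ∀ x, ¬(G.Adj u x ∧ G.Adj v x)) : 2 < G.dist u v := by
  refine lt_of_le_of_ne (h.one_lt_dist_of_ne_of_not_adj hne hnadj) fun h2 => ?_
  have : G.edist u v = 2 := by rw [← h.coe_dist_eq_edist, ← h2]; rfl
  obtain ⟨x, hx⟩ := (edist_eq_two_iff.mp this).2.2
  exact hcommon x (G.mem_commonNeighbors.mp hx)

theorem Coloring.even_dist_iff (c : G.Coloring Bool) (h : G.Reachable u v) :
    Even (G.dist u v) ↔ (c u ↔ c v) := by
  obtain ⟨p, hp⟩ := h.exists_walk_length_eq_dist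
  rw [← hp, c.even_length_iff_congr]

end SimpleGraph

namespace GearGraph

variable {n : ℕ}

theorem adj_none_inl (i : Fin n) : (gearGraph n).Adj none (some (.inl i)) := by
  simp [gearGraph]

theorem adj_inr_inl_iff {i j : Fin n} :
    (gearGraph n).Adj (some (.inr j)) (some (.inl i)) ↔ i = j ∨ (j.val + 1) % n = i.val := by
  simp [gearGraph]

def spokeColoring (n : ℕ) : (gearGraph n).Coloring Bool :=
  Coloring.mk (fun u => u matches some (.inl _)) fun {u v} h => by
    rcases u with _ | i | i <;> rcases v with _ | j | j <;> simp_all [gearGraph]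

theorem exists_eq_inl_of_adj_inr {j : Fin n} {x : Option (Fin n ⊕ Fin n)}
    (h : (gearGraph n).Adj (some (.inr j)) x) :
    ∃ k : Fin n, x = some (.inl k) ∧ (k = j ∨ (j.val + 1) % n = k.val) := by
  rcases x with _ | k | k
  · simp [gearGraph] at h
  · exact ⟨k, rfl, adj_inr_inl_iff.mp h⟩
  · simp [gearGraph] at h

theorem edist_none_le (u : Option (Fin n ⊕ Fin n)) : (gearGraph n).edist none u ≤ 2 := by
  rcases u with _ | i | j
  · simp
  · rw [edist_eq_one_iff_adj.mpr (adj_none_inl i)]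
    norm_num
  · have hw : (gearGraph n).Adj (some (.inl j)) (some (.inr j)) :=
      (adj_inr_inl_iff.mpr (Or.inl rfl)).symm
    exact ((Walk.cons (adj_none_inl j) hw.toWalk).edist_le).trans (by simp)

theorem ediam_le : (gearGraph n).ediam ≤ 4 :=
  calc (gearGraph n).ediam ≤ 2 * (gearGraph n).eccent none := ediam_le_two_mul_eccent none
    _ ≤ 2 * 2 := by gcongr; exact iSup_le edist_none_le
    _ = 4 := by norm_num

theorem connected : (gearGraph n).Connected :=
  connected_of_ediam_ne_top (ne_top_of_le_ne_top (by simp) ediam_le)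

def wRank (n j : ℕ) : ℕ := if j % 2 = 0 then j / 2 else (n + 1) / 2 + j / 2

def vRank (n i : ℕ) : ℕ := if i = 0 then n - 1 else i - 1

def label (n : ℕ) : Option (Fin n ⊕ Fin n) → ℕ
  | none => 1
  | some (.inl i) => n + 5 + 3 * vRank n i
  | some (.inr j) => 4 + wRank n j

theorem succ_mod_cases {i j : ℕ} (hi : i < n) (h : (i + 1) % n = j) :
    j = i + 1 ∨ (i + 1 = n ∧ j = 0) := by
  rcases Nat.lt_or_ge (i + 1) n with h' | h'
  · exact .inl ((Nat.mod_eq_of_lt h').symm.trans h).symm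
  · obtain rfl : i + 1 = n := by omega
    simp_all

theorem wRank_lt {j : ℕ} (hj : j < n) : wRank n j < n := by
  unfold wRank; split_ifs <;> omega

theorem wRank_inj {j k : ℕ} (hj : j < n) (hk : k < n) (h : wRank n j = wRank n k) : j = k := by
  unfold wRank at h; split_ifs at h <;> omega

theorem wRank_add_three_le (hn : 7 ≤ n) {i j : ℕ} (hi : i < n) (hij : (i + 1) % n = j) :
    wRank n i + 3 ≤ wRank n j ∨ wRank n j + 3 ≤ wRank n i := by
  have := succ_mod_cases hi hij
  unfold wRank; split_ifs <;> omega

theorem vRank_lt {i : ℕ} (hi : i < n) : vRank n i < n := by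
  unfold vRank; split_ifs <;> omega

theorem vRank_inj {i k : ℕ} (hi : i < n) (hk : k < n) (h : vRank n i = vRank n k) : i = k := by
  unfold vRank at h; split_ifs at h <;> omega

theorem label_le (u : Option (Fin n ⊕ Fin n)) : label n u ≤ 4 * n + 2 := by
  rcases u with _ | i | j
  · simp only [label]; omega
  · have := vRank_lt i.isLt; simp only [label]; omega
  · have := wRank_lt j.isLt; simp only [label]; omega

theorem one_le_label (u : Option (Fin n ⊕ Fin n)) : 1 ≤ label n u := by
  rcases u with _ | i | j <;> simp only [label] <;> omega

def Separated (n : ℕ) (u v : Option (Fin n ⊕ Fin n)) : Prop :=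
  (5 : ℤ) ≤ (gearGraph n).dist u v + |(label n u : ℤ) - label n v|

theorem Separated.symm {u v : Option (Fin n ⊕ Fin n)} (h : Separated n u v) :
    Separated n v u := by
  rwa [Separated, dist_comm, abs_sub_comm]

theorem separated_none_inl (i : Fin n) : Separated n none (some (.inl i)) := by
  have hd : 0 < (gearGraph n).dist none (some (.inl i)) := connected.pos_dist_of_ne (by simp)
  have hgap : (4 : ℤ) ≤ |(label n none : ℤ) - label n (some (.inl i))| := by
    simp only [label]; rw [le_abs]; push_cast; omega
  unfold Separated; omega

theorem separated_none_inr (j : Fin n) : Separated n none (some (.inr j)) := by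
  have hd : 1 < (gearGraph n).dist none (some (.inr j)) :=
    connected.one_lt_dist_of_ne_of_not_adj (by simp) fun h => (spokeColoring n).valid h rfl
  have hgap : (3 : ℤ) ≤ |(label n none : ℤ) - label n (some (.inr j))| := by
    simp only [label]; rw [le_abs]; push_cast; omega
  unfold Separated; omega

theorem separated_inl_inl {i j : Fin n} (hij : i ≠ j) :
    Separated n (some (.inl i)) (some (.inl j)) := by
  have hd : 1 < (gearGraph n).dist (some (.inl i)) (some (.inl j)) :=
    connected.one_lt_dist_of_ne_of_not_adj (by simpa using hij)
      fun h => (spokeColoring n).valid h rfl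
  have hrank : vRank n i ≠ vRank n j := fun h => hij (Fin.ext (vRank_inj i.isLt j.isLt h))
  have hgap : (3 : ℤ) ≤ |(label n (some (.inl i)) : ℤ) - label n (some (.inl j))| := by
    simp only [label]; rw [le_abs]; push_cast; omega
  unfold Separated; omega

theorem separated_inl_inr (hn : 7 ≤ n) (i j : Fin n) :
    Separated n (some (.inl i)) (some (.inr j)) := by
  have hwj := wRank_lt j.isLt
  by_cases hclose : vRank n i = 0 ∧ n - 2 ≤ wRank n j
  · obtain ⟨hvi, hwj'⟩ := hclose
    have hi : i.val = 1 := by unfold vRank at hvi; split_ifs at hvi <;> omega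
    have hnadj : ¬(gearGraph n).Adj (some (.inl i)) (some (.inr j)) := by
      intro h
      rcases adj_inr_inl_iff.mp h.symm with rfl | h
      · simp [wRank, hi] at hwj'; omega
      · obtain h | ⟨-, h⟩ := succ_mod_cases j.isLt h
        · have hj : j.val = 0 := by omega
          simp [wRank, hj] at hwj'; omega
        · omega
    have hodd : ¬Even ((gearGraph n).dist (some (.inl i)) (some (.inr j))) := by
      rw [(spokeColoring n).even_dist_iff (connected _ _)]
      exact fun h => Bool.false_ne_true (h.mp rfl)
    have hd := connected.one_lt_dist_of_ne_of_not_adj (by simp) hnadj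
    have hgap : (2 : ℤ) ≤ |(label n (some (.inl i)) : ℤ) - label n (some (.inr j))| := by
      simp only [label]; rw [le_abs]; push_cast; omega
    rw [Nat.not_even_iff_odd, Nat.odd_iff] at hodd
    unfold Separated; omega
  · have hd : 0 < (gearGraph n).dist (some (.inl i)) (some (.inr j)) :=
      connected.pos_dist_of_ne (by simp)
    have hgap : (4 : ℤ) ≤ |(label n (some (.inl i)) : ℤ) - label n (some (.inr j))| := by
      simp only [label]; rw [le_abs]; push_cast; omega
    unfold Separated; omega

theorem separated_inr_inr (hn : 7 ≤ n) {i j : Fin n} (hij : i ≠ j) :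
    Separated n (some (.inr i)) (some (.inr j)) := by
  have hne : (some (.inr i) : Option (Fin n ⊕ Fin n)) ≠ some (.inr j) := by simpa using hij
  have hd : 1 < (gearGraph n).dist (some (.inr i)) (some (.inr j)) :=
    connected.one_lt_dist_of_ne_of_not_adj hne fun h => (spokeColoring n).valid h rfl
  by_cases hconsec : (i.val + 1) % n = j.val ∨ (j.val + 1) % n = i.val
  · have hgap : (3 : ℤ) ≤ |(label n (some (.inr i)) : ℤ) - label n (some (.inr j))| := by
      have := hconsec.elim (wRank_add_three_le hn i.isLt)
        fun h => (wRank_add_three_le hn j.isLt h).symm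
      simp only [label]; rw [le_abs]; push_cast; omega
    unfold Separated; omega
  · have hcommon : ∀ x, ¬((gearGraph n).Adj (some (.inr i)) x ∧
        (gearGraph n).Adj (some (.inr j)) x) := by
      rintro x ⟨hix, hjx⟩
      obtain ⟨k, rfl, hik⟩ := exists_eq_inl_of_adj_inr hix
      obtain ⟨k', hk, hjk⟩ := exists_eq_inl_of_adj_inr hjx
      obtain rfl : k = k' := by simpa using hk
      rcases hik with rfl | hik <;> rcases hjk with rfl | hjk
      · exact hij rfl
      · exact hconsec (.inr hjk)
      · exact hconsec (.inl hik)
      · have := succ_mod_cases i.isLt hik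
        have := succ_mod_cases j.isLt hjk
        exact hij (Fin.ext (by omega))
    have hd3 := (connected _ _).two_lt_dist_of_ne_of_not_adj hne
      (fun h => (spokeColoring n).valid h rfl) hcommon
    have heven : Even ((gearGraph n).dist (some (.inr i)) (some (.inr j))) :=
      ((spokeColoring n).even_dist_iff (connected _ _)).mpr Iff.rfl
    have hrank : wRank n i ≠ wRank n j := fun h => hij (Fin.ext (wRank_inj i.isLt j.isLt h))
    have hgap : (1 : ℤ) ≤ |(label n (some (.inr i)) : ℤ) - label n (some (.inr j))| := by
      simp only [label]; rw [le_abs]; push_cast; omega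
    rw [Nat.even_iff] at heven
    unfold Separated; omega

theorem separated (hn : 7 ≤ n) {u v : Option (Fin n ⊕ Fin n)} (huv : u ≠ v) :
    Separated n u v := by
  rcases u with _ | i | i <;> rcases v with _ | j | j
  · exact absurd rfl huv
  · exact separated_none_inl j
  · exact separated_none_inr j
  · exact (separated_none_inl i).symm
  · exact separated_inl_inl (by simpa using huv)
  · exact separated_inl_inr hn i j
  · exact (separated_none_inr i).symm
  · exact (separated_inl_inr hn j i).symm
  · exact separated_inr_inr hn (by simpa using huv)

end GearGraph

/-- For `n ≥ 7`, the radio number of the gear graph `G_n` is at most `4n + 2`. -/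
theorem radioNumber_gear_upper (n : ℕ) (hn : 7 ≤ n) :
    radioNumber (gearGraph n) ≤ 4 * n + 2 := by
  have hlabel : IsRadioLabeling (gearGraph n) (GearGraph.label n) :=
    isRadioLabeling_of_ediam_le GearGraph.ediam_le GearGraph.one_le_label
      fun _ _ huv => GearGraph.separated hn huv
  exact (radioNumber_le_of_isRadioLabeling hlabel).trans
    (Finset.sup_le fun u _ => GearGraph.label_le u)
end

section
/- The radio number of the gear graph G_4 equals 18, i.e., rn(G_4) = 4·4 + 2 = 18. -/
/-!
The upper bound is an explicit labeling of span 18. For the lower bound, list the vertices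
`x₀, …, x₈` by increasing label. Each gap `c xᵢ₊₁ - c xᵢ` is at least `5 - d(xᵢ, xᵢ₊₁)`, and
`d(xᵢ, xᵢ₊₁) ≤ L xᵢ + L xᵢ₊₁`, where `L` is the distance to the centre. Summing, every vertex
except the two endpoints is counted twice, so
`c x₈ ≥ 1 + 8 * 5 - 2 * ∑ L + L x₀ + L x₈ ≥ 41 - 24 + 1 = 18`,
the last `1` because the two endpoints cannot both be the centre.
-/

open Finset

namespace SimpleGraph

variable {V : Type*} {G : SimpleGraph V}

section DistanceCertificate

variable (D : V → V → ℕ)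

theorem exists_walk_length_le_of_descent
    (hdesc : ∀ u v, u ≠ v → ∃ w, G.Adj u w ∧ D w v + 1 ≤ D u v) (u v : V) :
    ∃ p : G.Walk u v, p.length ≤ D u v := by
  induction hn : D u v using Nat.strong_induction_on generalizing u with
  | _ n ih =>
    by_cases huv : u = v
    · subst huv
      exact ⟨.nil, Nat.zero_le _⟩
    · obtain ⟨w, hadj, hw⟩ := hdesc u v huv
      obtain ⟨q, hq⟩ := ih (D w v) (by omega) w rfl
      exact ⟨.cons hadj q, by rw [Walk.length_cons]; omega⟩

theorem le_length_of_lipschitz (hself : ∀ v, D v v = 0)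
    (hlip : ∀ a b v, G.Adj a b → D a v ≤ D b v + 1) {u v : V} (p : G.Walk u v) :
    D u v ≤ p.length := by
  induction p with
  | nil => simp [hself]
  | cons h q ih => exact (hlip _ _ _ h).trans (by rw [Walk.length_cons]; omega)

theorem connected_of_descent [Nonempty V]
    (hdesc : ∀ u v, u ≠ v → ∃ w, G.Adj u w ∧ D w v + 1 ≤ D u v) : G.Connected :=
  ⟨fun u v => ⟨(exists_walk_length_le_of_descent D hdesc u v).choose⟩⟩

theorem dist_eq_of_descent (hself : ∀ v, D v v = 0)
    (hlip : ∀ a b v, G.Adj a b → D a v ≤ D b v + 1)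
    (hdesc : ∀ u v, u ≠ v → ∃ w, G.Adj u w ∧ D w v + 1 ≤ D u v) (u v : V) :
    G.dist u v = D u v := by
  obtain ⟨p, hp⟩ := exists_walk_length_le_of_descent D hdesc u v
  obtain ⟨q, hq⟩ := Reachable.exists_walk_length_eq_dist ⟨p⟩
  exact le_antisymm ((dist_le p).trans hp) (hq ▸ le_length_of_lipschitz D hself hlip q)

end DistanceCertificate

theorem Connected.diam_eq [Finite V] (hG : G.Connected) {k : ℕ}
    (hle : ∀ u v, G.dist u v ≤ k) {u v : V} (huv : G.dist u v = k) : G.diam = k := by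
  have := hG.nonempty
  obtain ⟨a, b, hab⟩ := G.exists_dist_eq_diam
  exact le_antisymm (hab ▸ hle a b) (huv ▸ dist_le_diam (connected_iff_ediam_ne_top.mp hG))

end SimpleGraph

section RadioLabeling

variable {V : Type*} [Fintype V] {G : SimpleGraph V} {c : V → ℕ}

theorem IsRadioLabeling.diam_add_le (hc : IsRadioLabeling G c) {u v : V} (huv : u ≠ v)
    (hle : c u ≤ c v) : G.diam + 1 + c u ≤ G.dist u v + c v := by
  have h := hc.2.2 u v huv
  rw [abs_of_nonpos (by omega)] at h
  omega

theorem IsRadioLabeling.radioNumber_eq_of_forall_le (hc : IsRadioLabeling G c)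
    (hmin : ∀ c', IsRadioLabeling G c' → univ.sup c ≤ univ.sup c') :
    radioNumber G = univ.sup c :=
  le_antisymm (Nat.sInf_le ⟨c, hc, rfl⟩)
    (le_csInf ⟨_, c, hc, rfl⟩ (by rintro _ ⟨c', hc', rfl⟩; exact hmin c' hc'))

/-- The radio condition summed over `S` listed by increasing label, from `y` up to `x`. -/
theorem IsRadioLabeling.exists_le_sum_dist [DecidableEq V] (hG : G.Connected)
    (hc : IsRadioLabeling G c) (z : V) (S : Finset V) (hS : S.Nonempty) :
    ∃ x ∈ S, ∃ y ∈ S, (S.Nontrivial → x ≠ y) ∧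
      c y + #S * (G.diam + 1) + G.dist z x + G.dist z y ≤
        c x + (G.diam + 1) + 2 * ∑ s ∈ S, G.dist z s := by
  induction S using Finset.induction_on_max_value c with
  | empty => exact absurd hS Finset.not_nonempty_empty
  | insert a s has hmax ih =>
    rcases s.eq_empty_or_nonempty with rfl | hs
    · refine ⟨a, mem_insert_self a ∅, a, mem_insert_self a ∅, fun h => ?_, ?_⟩
      · exact absurd h (by simp)
      · rw [insert_empty, card_singleton, sum_singleton]
        omega
    · obtain ⟨x, hx, y, hy, -, hxy⟩ := ih hs
      have hgap := hc.diam_add_le (by rintro rfl; exact has hx) (hmax x hx)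
      have htri : G.dist x a ≤ G.dist z x + G.dist z a :=
        G.dist_comm (u := x) ▸ hG.dist_triangle
      refine ⟨a, mem_insert_self a s, y, mem_insert_of_mem hy,
        fun _ => by rintro rfl; exact has hy, ?_⟩
      rw [card_insert_of_notMem has, sum_insert has, add_one_mul]
      omega

theorem IsRadioLabeling.card_sub_one_mul_le [Nontrivial V] (hG : G.Connected)
    (hc : IsRadioLabeling G c) (z : V) :
    (Fintype.card V - 1) * (G.diam + 1) + 2 ≤ univ.sup c + 2 * ∑ v, G.dist z v := by
  classical
  obtain ⟨x, -, y, -, hxy, h⟩ := hc.exists_le_sum_dist hG z univ univ_nonempty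
  have hend : 1 ≤ G.dist z x + G.dist z y := by
    by_contra! h0
    have hzx := hG.dist_eq_zero_iff.mp (by omega : G.dist z x = 0)
    have hzy := hG.dist_eq_zero_iff.mp (by omega : G.dist z y = 0)
    exact hxy univ_nontrivial (hzx ▸ hzy)
  have hy := hc.2.1 y
  have hx : c x ≤ univ.sup c := le_sup (mem_univ x)
  obtain ⟨n, hn⟩ := Nat.exists_eq_succ_of_ne_zero (Fintype.card_ne_zero (α := V))
  rw [card_univ, hn, Nat.succ_eq_add_one, add_one_mul] at h
  rw [hn, Nat.succ_sub_one]
  omega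

end RadioLabeling

instance (n : ℕ) : DecidableRel (gearGraph n).Adj := fun a b =>
  decidable_of_iff' _ (SimpleGraph.fromRel_adj _ a b)

def gearFourDist : Option (Fin 4 ⊕ Fin 4) → Option (Fin 4 ⊕ Fin 4) → ℕ
  | none, none => 0
  | none, some (.inl _) => 1
  | none, some (.inr _) => 2
  | some (.inl _), none => 1
  | some (.inr _), none => 2
  | some (.inl i), some (.inl j) => if i = j then 0 else 2
  | some (.inl i), some (.inr j) => if i = j ∨ (j.val + 1) % 4 = i.val then 1 else 3
  | some (.inr i), some (.inl j) => if j = i ∨ (i.val + 1) % 4 = j.val then 1 else 3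
  | some (.inr i), some (.inr j) => if i = j then 0 else if (i.val + 2) % 4 = j.val then 4 else 2

theorem gearFourDist_descent (u v : Option (Fin 4 ⊕ Fin 4)) (huv : u ≠ v) :
    ∃ w, (gearGraph 4).Adj u w ∧ gearFourDist w v + 1 ≤ gearFourDist u v := by
  revert u v
  decide

theorem gearGraph_four_dist (u v : Option (Fin 4 ⊕ Fin 4)) :
    (gearGraph 4).dist u v = gearFourDist u v :=
  SimpleGraph.dist_eq_of_descent gearFourDist (by decide) (by decide) gearFourDist_descent u v

theorem gearGraph_four_connected : (gearGraph 4).Connected :=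
  SimpleGraph.connected_of_descent gearFourDist gearFourDist_descent

theorem gearGraph_four_diam : (gearGraph 4).diam = 4 :=
  gearGraph_four_connected.diam_eq (u := some (.inr 0)) (v := some (.inr 2))
    (by simp only [gearGraph_four_dist]; decide) (gearGraph_four_dist _ _)

def gearFourLabeling : Option (Fin 4 ⊕ Fin 4) → ℕ
  | none => 1
  | some (.inl i) => ![14, 10, 6, 18] i
  | some (.inr i) => ![4, 16, 12, 8] i

theorem isRadioLabeling_gearFourLabeling : IsRadioLabeling (gearGraph 4) gearFourLabeling := by
  refine ⟨by decide, by decide, fun u v huv => ?_⟩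
  rw [gearGraph_four_diam, gearGraph_four_dist]
  revert u v
  decide

theorem sup_gearFourLabeling : univ.sup gearFourLabeling = 18 := by decide

/-- The radio number of the gear graph `G_4` is `18`. -/
theorem radioNumber_gear_4 : radioNumber (gearGraph 4) = 18 := by
  rw [← sup_gearFourLabeling]
  refine isRadioLabeling_gearFourLabeling.radioNumber_eq_of_forall_le fun c hc => ?_
  have hbound := hc.card_sub_one_mul_le gearGraph_four_connected none
  have hsum : ∑ v, (gearGraph 4).dist none v = 12 := by
    simp only [gearGraph_four_dist]
    decide
  have hcard : Fintype.card (Option (Fin 4 ⊕ Fin 4)) = 9 := rfl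
  rw [gearGraph_four_diam, hsum, hcard] at hbound
  rw [sup_gearFourLabeling]
  omega
end

section
/- The radio number of the gear graph G_5 equals 22, i.e., rn(G_5) = 4·5 + 2 = 22. -/
open SimpleGraph Finset Fin.NatCast

theorem le_sub_of_forall_gap_le (a w : ℕ → ℤ) (K : ℤ) :
    ∀ m : ℕ, (∀ i < m, K - w i - w (i + 1) ≤ a (i + 1) - a i) →
      m * K - 2 * ∑ i ∈ range (m + 1), w i + w 0 + w m ≤ a m - a 0
  | 0, _ => by simp; linarith
  | m + 1, h => by
    have ih := le_sub_of_forall_gap_le a w K m fun i hi => h i (by omega)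
    have last := h m (by omega)
    rw [sum_range_succ]
    push_cast
    linarith

theorem Function.Injective.exists_equiv_fin_strictMono {V β : Type*} [Fintype V] [LinearOrder β]
    {c : V → β} (hc : Function.Injective c) {k : ℕ} (hk : Fintype.card V = k) :
    ∃ e : Fin k ≃ V, StrictMono (c ∘ e) := by
  let := LinearOrder.lift' c hc
  exact ⟨monoEquivOfFin V hk, (monoEquivOfFin V hk).strictMono⟩

theorem SimpleGraph.Walk.apply_le_add_length {V : Type*} {G : SimpleGraph V} {φ : V → ℕ}
    (hφ : ∀ a b, G.Adj a b → φ b ≤ φ a + 1) {u v : V} (p : G.Walk u v) :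
    φ v ≤ φ u + p.length := by
  induction p with
  | nil => simp
  | cons hadj _ ih =>
    have := hφ _ _ hadj
    rw [Walk.length_cons]
    omega

theorem SimpleGraph.Reachable.apply_le_add_dist {V : Type*} {G : SimpleGraph V} {φ : V → ℕ}
    (hφ : ∀ a b, G.Adj a b → φ b ≤ φ a + 1) {u v : V} (h : G.Reachable u v) :
    φ v ≤ φ u + G.dist u v := by
  obtain ⟨p, hp⟩ := h.exists_walk_length_eq_dist
  exact hp ▸ p.apply_le_add_length hφ

theorem SimpleGraph.Connected.one_le_dist_add_dist_of_ne {V : Type*} {G : SimpleGraph V}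
    (hG : G.Connected) (z : V) {u v : V} (huv : u ≠ v) : 1 ≤ G.dist z u + G.dist z v := by
  rcases ne_or_eq u z with hz | rfl
  · have := hG.pos_dist_of_ne hz.symm
    omega
  · have := hG.pos_dist_of_ne huv
    omega

theorem IsRadioLabeling.level_bound_le_sup {V : Type*} [Fintype V] [Nontrivial V]
    {G : SimpleGraph V} {c : V → ℕ} (hc : IsRadioLabeling G c) (hG : G.Connected) (z : V) :
    ((Fintype.card V - 1 : ℕ) * (G.diam + 1 : ℤ)) + 2 - 2 * ∑ v, (G.dist z v : ℤ)
      ≤ univ.sup c := by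
  obtain ⟨hinj, hpos, hgap⟩ := hc
  obtain ⟨m, hm⟩ : ∃ m, Fintype.card V = m + 1 :=
    Nat.exists_eq_succ_of_ne_zero Fintype.card_ne_zero
  obtain ⟨e, he⟩ := hinj.exists_equiv_fin_strictMono hm
  set σ : ℕ → V := fun k => e (k : Fin (m + 1))
  set L : V → ℤ := fun v => G.dist z v
  have sum_level : ∑ i ∈ range (m + 1), L (σ i) = ∑ v, L v := by
    rw [← Fin.sum_univ_eq_sum_range (fun i => L (σ i)), ← e.sum_comp]
    simp [σ]
  have gap : ∀ i < m, (G.diam + 1 : ℤ) - L (σ i) - L (σ (i + 1)) ≤ c (σ (i + 1)) - c (σ i) := by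
    intro i hi
    have hlt : c (σ i) < c (σ (i + 1)) :=
      he (Fin.natCast_strictMono hi (Nat.lt_succ_self i))
    have hne : σ i ≠ σ (i + 1) := fun h => hlt.ne (congrArg c h)
    have hrad := hgap _ _ hne
    have htri := hG.dist_triangle (u := σ i) (v := z) (w := σ (i + 1))
    rw [G.dist_comm (u := σ i) (v := z)] at htri
    rw [abs_sub_comm, abs_of_nonneg (by omega)] at hrad
    linarith
  have ends : 1 ≤ L (σ 0) + L (σ m) := by
    have hm_pos : 0 < m := by
      have := Fintype.one_lt_card (α := V)
      omega
    have hne : σ 0 ≠ σ m := e.injective.ne (by simpa [Fin.ext_iff, eq_comm] using hm_pos.ne')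
    have := hG.one_le_dist_add_dist_of_ne z hne
    simp only [L]
    omega
  have telescope := le_sub_of_forall_gap_le (fun k => c (σ k)) (fun k => L (σ k)) _ m gap
  have hmax : c (σ m) ≤ univ.sup c := le_sup (mem_univ _)
  have hmin := hpos (σ 0)
  rw [hm, Nat.add_sub_cancel, ← sum_level]
  linarith

namespace gearGraph

variable {n : ℕ}

instance : DecidableRel (gearGraph n).Adj := fun u v =>
  decidable_of_iff _ (fromRel_adj _ u v).symm

theorem adj_none_inl (i : Fin n) : (gearGraph n).Adj none (some (.inl i)) := by
  simp [gearGraph]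

theorem adj_inl_inr (i : Fin n) : (gearGraph n).Adj (some (.inl i)) (some (.inr i)) := by
  simp [gearGraph]

def level : Option (Fin n ⊕ Fin n) → ℕ
  | none => 0
  | some (.inl _) => 1
  | some (.inr _) => 2

theorem level_le_two (v : Option (Fin n ⊕ Fin n)) : level v ≤ 2 := by
  rcases v with _ | _ | _ <;> simp [level]

theorem reachable_none (v : Option (Fin n ⊕ Fin n)) : (gearGraph n).Reachable none v := by
  rcases v with _ | i | i
  · rfl
  · exact (adj_none_inl i).reachable
  · exact (adj_none_inl i).reachable.trans (adj_inl_inr i).reachable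

theorem connected (n : ℕ) : (gearGraph n).Connected :=
  (connected_iff_exists_forall_reachable _).2 ⟨none, reachable_none⟩

theorem dist_none_le_level (v : Option (Fin n ⊕ Fin n)) :
    (gearGraph n).dist none v ≤ level v := by
  rcases v with _ | i | i
  · simp [level]
  · exact dist_le (adj_none_inl i).toWalk
  · exact dist_le (.cons (adj_none_inl i) (adj_inl_inr i).toWalk)

theorem sum_level : ∑ v : Option (Fin n ⊕ Fin n), level v = 3 * n := by
  simp [Fintype.sum_option, level]
  ring

theorem diam_le_four : (gearGraph n).diam ≤ 4 := by
  obtain ⟨u, v, huv⟩ := (gearGraph n).exists_dist_eq_diam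
  have htri := (connected n).dist_triangle (u := u) (v := none) (w := v)
  rw [dist_comm (u := u) (v := none)] at htri
  have := dist_none_le_level u
  have := dist_none_le_level v
  have := level_le_two u
  have := level_le_two v
  omega

/-- Position on the rim cycle `v₀ w₀ v₁ w₁ … vₙ₋₁ wₙ₋₁`. -/
def rimIndex : Fin n ⊕ Fin n → ℕ
  | .inl i => 2 * i
  | .inr i => 2 * i + 1

def rimDist (a b : Fin n ⊕ Fin n) : ℕ :=
  min ((rimIndex a + 2 * n - rimIndex b) % (2 * n)) ((rimIndex b + 2 * n - rimIndex a) % (2 * n))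

/-- A shortest path either stays on the rim or passes through the center. -/
def distFormula : Option (Fin n ⊕ Fin n) → Option (Fin n ⊕ Fin n) → ℕ
  | none, v => level v
  | some a, none => level (some a)
  | some a, some b => min (rimDist a b) (level (some a) + level (some b))

theorem distFormula_le_dist (u v : Option (Fin 5 ⊕ Fin 5)) :
    distFormula u v ≤ (gearGraph 5).dist u v := by
  have hlip : ∀ u a b, (gearGraph 5).Adj a b → distFormula u b ≤ distFormula u a + 1 := by decide
  have hself : ∀ u : Option (Fin 5 ⊕ Fin 5), distFormula u u = 0 := by decide
  simpa [hself] using ((connected 5) u v).apply_le_add_dist (hlip u)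

theorem diam_five : (gearGraph 5).diam = 4 := by
  refine le_antisymm diam_le_four ?_
  calc 4 = distFormula (some (.inr 0)) (some (.inr 2)) := by decide
    _ ≤ (gearGraph 5).dist (some (.inr 0)) (some (.inr 2)) := distFormula_le_dist _ _
    _ ≤ (gearGraph 5).diam := dist_le_diam (connected_iff_ediam_ne_top.1 (connected 5))

/-- In label order `z, w₀, v₂, w₃, v₀, w₁, v₃, w₄, v₁, w₂, v₄` each gap is `5 - d` for the
consecutive pair, so every inequality of the lower bound is tight. -/
def label : Option (Fin 5 ⊕ Fin 5) → ℕ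
  | none => 1
  | some (.inl j) => ![10, 18, 6, 14, 22] j
  | some (.inr j) => ![4, 12, 20, 8, 16] j

theorem isRadioLabeling_label : IsRadioLabeling (gearGraph 5) label := by
  refine ⟨by decide, by decide, fun u v huv => ?_⟩
  have hgap : ∀ u v, u ≠ v → (5 : ℤ) ≤ distFormula u v + |(label u : ℤ) - label v| := by decide
  have := hgap u v huv
  have := distFormula_le_dist u v
  rw [diam_five]
  push_cast
  linarith

end gearGraph

/-- The radio number of the gear graph `G_5` is `22`. -/
theorem radioNumber_gear_5 : radioNumber (gearGraph 5) = 22 := by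
  refine IsLeast.csInf_eq ⟨⟨gearGraph.label, gearGraph.isRadioLabeling_label, by decide⟩, ?_⟩
  rintro _ ⟨c, hc, rfl⟩
  have hbound := hc.level_bound_le_sup (gearGraph.connected 5) none
  have hlevels : ∑ v, ((gearGraph 5).dist none v : ℤ) ≤ 15 := by
    exact_mod_cast (sum_le_sum fun v _ => gearGraph.dist_none_le_level v).trans_eq
      gearGraph.sum_level
  have hcard : Fintype.card (Option (Fin 5 ⊕ Fin 5)) = 11 := rfl
  rw [gearGraph.diam_five, hcard] at hbound
  push_cast at hbound
  exact_mod_cast (by linarith : (22 : ℤ) ≤ univ.sup c)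
end
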